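/- Let X be a finite-dimensional complex analytic manifold and let U be an open subset of X which is bounded for the Carathéodory pseudodistance c_X. Set M = sup_{x∈U, y∈U} c_X(x,y) and k = tanh(M) < 1. Then for all x ∈ U and all y ∈ U, c_X(x,y) ≤ k · c_U(x,y). -/

import Mathlib

open scoped Manifold ENNReal

/-- The inverse hyperbolic tangent (tanh⁻¹), the inverse of `Real.tanh` on `(-1, 1)`. -/
noncomputable def artanh (x : ℝ) : ℝ := Real.log ((1 + x) / (1 - x)) / 2

/-- The Poincaré distance on the unit disc `Δ ⊂ ℂ`:
`ω(z, w) = tanh⁻¹ |(z - w) / (1 - w̄ z)|`. -/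
noncomputable def poincareDist (z w : ℂ) : ℝ :=
  artanh (‖(z - w) / (1 - (starRingEnd ℂ) w * z)‖)

/-- The Carathéodory pseudodistance of a complex manifold `X` modeled on `E`:
`c_X(x, y) = sup { ω(φ x, φ y) : φ : X → Δ holomorphic }` (with values in `[0, ∞]`). -/
noncomputable def caratheodory (E : Type*) [NormedAddCommGroup E] [NormedSpace ℂ E]
    (X : Type*) [TopologicalSpace X] [ChartedSpace E X] (x y : X) : ℝ≥0∞ :=
  ⨆ φ ∈ {φ : X → ℂ | MDifferentiable 𝓘(ℂ, E) 𝓘(ℂ, ℂ) φ ∧ ∀ z, ‖φ z‖ < 1},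
    ENNReal.ofReal (poincareDist (φ x) (φ y))

open Set Filter Topology

/-!
Given a holomorphic `φ : X → Δ`, compose it with the disc automorphism sending `φ x` to `0`; the
result `ψ` satisfies `ω(φ x, φ z) = artanh ‖ψ z‖`, so `‖ψ‖ ≤ tanh M = k` on `U`. For `κ ∈ (k, 1]`
the map `ψ / κ` sends `U` into `Δ`, whence `artanh (‖ψ y‖ / κ) ≤ c_U(x, y)`. Convexity of `artanh`
on `[0, 1)` together with `artanh 0 = 0` gives `artanh (κ s) ≤ κ artanh s`, so
`ω(φ x, φ y) ≤ κ c_U(x, y)`; now let `κ ↓ k`.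
-/

lemma artanh_eq_real_artanh {x : ℝ} (hx : x ∈ Icc (-1) 1) : artanh x = Real.artanh x := by
  rw [Real.artanh_eq_half_log hx, artanh]
  ring

lemma artanh_zero : artanh 0 = 0 := by simp [artanh]

lemma artanh_le_iff_le_tanh {t : ℝ} (ht : t ∈ Ioo (-1) 1) (r : ℝ) :
    artanh t ≤ r ↔ t ≤ Real.tanh r := by
  rw [artanh_eq_real_artanh (Ioo_subset_Icc_self ht),
    ← Real.artanh_le_artanh_iff ht ⟨Real.neg_one_lt_tanh r, Real.tanh_lt_one r⟩, Real.artanh_tanh]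

lemma hasDerivAt_artanh {x : ℝ} (hx : x ∈ Ioo (-1) 1) :
    HasDerivAt artanh (1 / (1 - x ^ 2)) x := by
  obtain ⟨h₁, h₂⟩ := hx
  have h₁' : 1 + x ≠ 0 := by linarith
  have h₂' : 1 - x ≠ 0 := by linarith
  have hq : HasDerivAt (fun y => (1 + y) / (1 - y)) (2 / (1 - x) ^ 2) x :=
    (((hasDerivAt_id x).const_add 1).div ((hasDerivAt_id x).const_sub 1) h₂').congr_deriv
      (by simp; ring)
  have h₃ : 1 - x ^ 2 = (1 + x) * (1 - x) := by ring
  exact ((hq.log (div_ne_zero h₁' h₂')).div_const 2).congr_deriv (by rw [h₃]; field_simp)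

lemma convexOn_artanh : ConvexOn ℝ (Ico 0 1) artanh := by
  have hsub : Ico (0 : ℝ) 1 ⊆ Ioo (-1) 1 := Ico_subset_Ioo_left (by norm_num)
  refine MonotoneOn.convexOn_of_deriv (convex_Ico 0 1)
    (fun x hx => (hasDerivAt_artanh (hsub hx)).continuousAt.continuousWithinAt)
    (fun x hx => (hasDerivAt_artanh (hsub (interior_subset hx))).differentiableAt
      |>.differentiableWithinAt) ?_
  rw [interior_Ico]
  intro a ha b hb hab
  rw [(hasDerivAt_artanh (hsub (Ioo_subset_Ico_self ha))).deriv,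
    (hasDerivAt_artanh (hsub (Ioo_subset_Ico_self hb))).deriv]
  exact one_div_le_one_div_of_le (by nlinarith [hb.2, ha.1]) (by nlinarith [ha.1])

lemma artanh_mul_le_mul_artanh {κ s : ℝ} (hκ₀ : 0 ≤ κ) (hκ₁ : κ ≤ 1) (hs : s ∈ Ico 0 1) :
    artanh (κ * s) ≤ κ * artanh s := by
  simpa [artanh_zero] using
    convexOn_artanh.2 (left_mem_Ico.2 one_pos) hs (sub_nonneg.2 hκ₁) hκ₀ (by ring)

noncomputable def moebius (a z : ℂ) : ℂ := (z - a) / (1 - (starRingEnd ℂ) a * z)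

lemma moebius_self (a : ℂ) : moebius a a = 0 := by simp [moebius]

lemma normSq_one_sub_conj_mul_sub_normSq_sub (a z : ℂ) :
    Complex.normSq (1 - (starRingEnd ℂ) a * z) - Complex.normSq (z - a) =
      (1 - Complex.normSq a) * (1 - Complex.normSq z) := by
  simp only [Complex.normSq_apply, Complex.sub_re, Complex.sub_im, Complex.mul_re, Complex.mul_im,
    Complex.conj_re, Complex.conj_im, Complex.one_re, Complex.one_im]
  ring

lemma one_sub_conj_mul_ne_zero {a z : ℂ} (ha : ‖a‖ < 1) (hz : ‖z‖ < 1) :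
    1 - (starRingEnd ℂ) a * z ≠ 0 := by
  intro h
  have h₁ : ‖(starRingEnd ℂ) a * z‖ = 1 := by rw [← sub_eq_zero.1 h, norm_one]
  rw [norm_mul, Complex.norm_conj] at h₁
  nlinarith [norm_nonneg a, norm_nonneg z]

lemma norm_moebius_lt_one {a z : ℂ} (ha : ‖a‖ < 1) (hz : ‖z‖ < 1) : ‖moebius a z‖ < 1 := by
  have hnormSq : Complex.normSq (z - a) < Complex.normSq (1 - (starRingEnd ℂ) a * z) := by
    have := normSq_one_sub_conj_mul_sub_normSq_sub a z
    have : 0 < (1 - Complex.normSq a) * (1 - Complex.normSq z) := by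
      rw [Complex.normSq_eq_norm_sq, Complex.normSq_eq_norm_sq]
      apply mul_pos <;> nlinarith [norm_nonneg a, norm_nonneg z]
    linarith
  rw [moebius, norm_div, div_lt_one (norm_pos_iff.2 (one_sub_conj_mul_ne_zero ha hz))]
  rw [Complex.normSq_eq_norm_sq, Complex.normSq_eq_norm_sq] at hnormSq
  exact lt_of_pow_lt_pow_left₀ 2 (norm_nonneg _) hnormSq

lemma differentiableAt_moebius {a z : ℂ} (ha : ‖a‖ < 1) (hz : ‖z‖ < 1) :
    DifferentiableAt ℂ (moebius a) z :=
  ((differentiableAt_id.sub_const a).div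
    ((differentiableAt_const _).sub ((differentiableAt_const _).mul differentiableAt_id))
    (one_sub_conj_mul_ne_zero ha hz))

lemma poincareDist_comm (z w : ℂ) : poincareDist z w = poincareDist w z := by
  have hden : ‖1 - (starRingEnd ℂ) w * z‖ = ‖1 - (starRingEnd ℂ) z * w‖ := by
    rw [← Complex.norm_conj]
    simp [mul_comm]
  simp only [poincareDist, norm_div, norm_sub_rev z w, hden]

lemma poincareDist_eq_artanh_norm_moebius (a z : ℂ) :
    poincareDist z a = artanh ‖moebius a z‖ := rfl

lemma poincareDist_zero_left (w : ℂ) : poincareDist 0 w = artanh ‖w‖ := by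
  simp [poincareDist]

lemma ENNReal.le_ofReal_mul_of_eventually_nhdsGT {a b : ℝ≥0∞} {k : ℝ} (hk : 0 < k)
    (h : ∀ᶠ κ in 𝓝[>] k, a ≤ ENNReal.ofReal κ * b) : a ≤ ENNReal.ofReal k * b :=
  ge_of_tendsto (ENNReal.Tendsto.mul_const
    ((ENNReal.continuous_ofReal.tendsto k).mono_left nhdsWithin_le_nhds)
    (Or.inl (ENNReal.ofReal_pos.2 hk).ne')) h

section Caratheodory

variable {E : Type*} [NormedAddCommGroup E] [NormedSpace ℂ E]
  {X : Type*} [TopologicalSpace X] [ChartedSpace E X]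

lemma ofReal_poincareDist_le_caratheodory {φ : X → ℂ} (hφ : MDifferentiable 𝓘(ℂ, E) 𝓘(ℂ, ℂ) φ)
    (hφΔ : ∀ z, ‖φ z‖ < 1) (x y : X) :
    ENNReal.ofReal (poincareDist (φ x) (φ y)) ≤ caratheodory E X x y :=
  le_biSup (fun φ : X → ℂ => ENNReal.ofReal (poincareDist (φ x) (φ y))) ⟨hφ, hφΔ⟩

lemma ofReal_artanh_norm_le_mul_caratheodory {ψ : X → ℂ}
    (hψ : MDifferentiable 𝓘(ℂ, E) 𝓘(ℂ, ℂ) ψ) {x : X} (hx : ψ x = 0) {κ : ℝ} (hκ₀ : 0 < κ)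
    (hκ₁ : κ ≤ 1) (hψκ : ∀ z, ‖ψ z‖ < κ) (y : X) :
    ENNReal.ofReal (artanh ‖ψ y‖) ≤ ENNReal.ofReal κ * caratheodory E X x y := by
  have hscaled : ∀ z, ‖ψ z / κ‖ = ‖ψ z‖ / κ := fun z => by simp [abs_of_pos hκ₀]
  have hχ := ofReal_poincareDist_le_caratheodory (φ := fun z => ψ z / κ)
    ((differentiable_id.div_const (κ : ℂ)).comp_mdifferentiable hψ)
    (fun z => by rw [hscaled, div_lt_one hκ₀]; exact hψκ z) x y
  rw [hx, zero_div, poincareDist_zero_left, hscaled] at hχ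
  have hle : artanh ‖ψ y‖ ≤ κ * artanh (‖ψ y‖ / κ) := by
    simpa [mul_div_cancel₀ _ hκ₀.ne'] using
      artanh_mul_le_mul_artanh hκ₀.le hκ₁ ⟨by positivity, (div_lt_one hκ₀).2 (hψκ y)⟩
  calc ENNReal.ofReal (artanh ‖ψ y‖) ≤ ENNReal.ofReal (κ * artanh (‖ψ y‖ / κ)) :=
        ENNReal.ofReal_le_ofReal hle
    _ = ENNReal.ofReal κ * ENNReal.ofReal (artanh (‖ψ y‖ / κ)) := ENNReal.ofReal_mul hκ₀.le
    _ ≤ ENNReal.ofReal κ * caratheodory E X x y := by gcongr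

end Caratheodory

theorem caratheodory_le_tanh_sup_mul_general
    {E : Type*} [NormedAddCommGroup E] [NormedSpace ℂ E]
    {X : Type*} [TopologicalSpace X] [ChartedSpace E X]
    (U : TopologicalSpace.Opens X)
    (M : ℝ≥0∞) (hM : M = ⨆ (x : U) (y : U), caratheodory E X (x : X) (y : X))
    (hbdd : M ≠ ⊤) (k : ℝ) (hk : k = Real.tanh M.toReal) :
    k < 1 ∧ ∀ x y : U,
      caratheodory E X (x : X) (y : X) ≤ ENNReal.ofReal k * caratheodory E U x y := by
  have hk₁ : k < 1 := hk ▸ Real.tanh_lt_one _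
  refine ⟨hk₁, fun x y => iSup₂_le fun φ ⟨hφ, hφΔ⟩ => ?_⟩
  set ψ : X → ℂ := fun z => moebius (φ x) (φ z)
  have hψΔ : ∀ z, ‖ψ z‖ < 1 := fun z => norm_moebius_lt_one (hφΔ x) (hφΔ z)
  have hψU : ∀ z : U, ‖ψ z‖ ≤ k := fun z => by
    rw [hk, ← artanh_le_iff_le_tanh ⟨by linarith [norm_nonneg (ψ z)], hψΔ z⟩,
      ← ENNReal.ofReal_le_iff_le_toReal hbdd, ← poincareDist_eq_artanh_norm_moebius]
    exact (ofReal_poincareDist_le_caratheodory hφ hφΔ z x).trans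
      (hM ▸ le_iSup₂ (f := fun u v : U => caratheodory E X u v) z x)
  rw [poincareDist_comm, poincareDist_eq_artanh_norm_moebius]
  change ENNReal.ofReal (artanh ‖ψ y‖) ≤ _
  rcases (norm_nonneg (ψ y)).eq_or_lt with h₀ | hpos
  · simp [← h₀, artanh_zero]
  have hψ : MDifferentiable 𝓘(ℂ, E) 𝓘(ℂ, ℂ) ψ := fun z =>
    (differentiableAt_moebius (hφΔ x) (hφΔ z)).comp_mdifferentiableAt (hφ z)
  refine ENNReal.le_ofReal_mul_of_eventually_nhdsGT (hpos.trans_le (hψU y)) ?_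
  filter_upwards [Ioc_mem_nhdsGT hk₁] with κ ⟨hkκ, hκ₁⟩
  exact ofReal_artanh_norm_le_mul_caratheodory
    (hψ.comp (contMDiff_subtype_val.mdifferentiable one_ne_zero)) (moebius_self _)
    ((hpos.trans_le (hψU y)).trans hkκ) hκ₁ (fun z => (hψU z).trans_lt hkκ) y

/-- Let `X` be a finite-dimensional complex analytic manifold and `U ⊆ X` an open subset
bounded for the Carathéodory pseudodistance `c_X`. With `M = sup_{x,y ∈ U} c_X(x,y)` and
`k = tanh M < 1`, one has `c_X(x,y) ≤ k · c_U(x,y)` for all `x, y ∈ U`. -/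
theorem caratheodory_le_tanh_sup_mul
    {E : Type*} [NormedAddCommGroup E] [NormedSpace ℂ E] [FiniteDimensional ℂ E]
    {X : Type*} [TopologicalSpace X] [ChartedSpace E X] [IsManifold 𝓘(ℂ, E) (⊤ : WithTop ℕ∞) X]
    (U : TopologicalSpace.Opens X)
    (M : ℝ≥0∞) (hM : M = ⨆ (x : U) (y : U), caratheodory E X (x : X) (y : X))
    (hbdd : M ≠ ⊤) (k : ℝ) (hk : k = Real.tanh M.toReal) :
    k < 1 ∧ ∀ x y : U,
      caratheodory E X (x : X) (y : X) ≤ ENNReal.ofReal k * caratheodory E U x y :=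
  caratheodory_le_tanh_sup_mul_general U M hM hbdd k hk
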